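/- In the tree T over {a,b} with vertex set {a^n b^m : n ≥ 0, m ≤ n+1} where every vertex has an ex-edge, the subtrees rooted at the vertices a^k (k ≥ 0) are pairwise non-bisimilar; hence T has infinitely many subtrees up to bisimilarity and is not the unfolding of any finite labelled transition system. -/

import Mathlib

/-!
From `aⁿ` the longest run of `b`-edges has length `n + 1`, and a simulation can only lengthen
such runs, so a simulation relating `aⁱ` to `aʲ` forces `i ≤ j`; hence bisimilar subtrees at `aᵏ`
and `aˡ` have `k = l`. In the unfolding of a transition system, vertices reached in the same
state simulate each other, so an isomorphism from `T` onto such an unfolding would send the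
vertices `aᵏ` to pairwise distinct states, of which a finite system has too few.
-/

/-- A rooted edge-labelled graph used to represent synchronization trees over an
alphabet `A`.  Edge labels are in `Option A`, where `none` is the special
exit (termination) label `ex` and `some a` is an action label `a ∈ A`. -/
structure SyncTree (A : Type) where
  V : Type
  root : V
  edge : V → Option A → V → Prop

namespace SyncTree

variable {A : Type}

/-- Reachability along edges. -/
def Reaches (t : SyncTree A) (u v : t.V) : Prop :=
  Relation.ReflTransGen (fun x y => ∃ l, t.edge x l y) u v

/-- `t` is a genuine synchronization tree: every vertex is reachable from the
root, every vertex has at most one incoming edge, the root has no incoming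
edge, and targets of exit edges are leaves. -/
def IsTree (t : SyncTree A) : Prop :=
  (∀ v, t.Reaches t.root v) ∧
  (∀ u₁ u₂ l₁ l₂ v, t.edge u₁ l₁ v → t.edge u₂ l₂ v → u₁ = u₂ ∧ l₁ = l₂) ∧
  (∀ u l, ¬ t.edge u l t.root) ∧
  (∀ u v, t.edge u none v → ∀ l w, ¬ t.edge v l w)

/-- No vertex has two equally-labelled outgoing edges. -/
def Deterministic (t : SyncTree A) : Prop :=
  ∀ u l v₁ v₂, t.edge u l v₁ → t.edge u l v₂ → v₁ = v₂

/-- Bisimilarity of the trees `t` and `t'`. -/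
def Bisimilar (t t' : SyncTree A) : Prop :=
  ∃ R : t.V → t'.V → Prop,
    R t.root t'.root ∧
    (∀ u u', R u u' → ∀ l v, t.edge u l v → ∃ v', t'.edge u' l v' ∧ R v v') ∧
    (∀ u u', R u u' → ∀ l v', t'.edge u' l v' → ∃ v, t.edge u l v ∧ R v v')

/-- The reachable vertices of `t` (the vertices of the tree proper). -/
def Rt (t : SyncTree A) : Type := {v : t.V // t.Reaches t.root v}

/-- An isomorphism between (the reachable parts of) two synchronization trees:
a bijection on vertices preserving the root, the edges and the labels. -/
structure Isomorphism (t t' : SyncTree A) where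
  toEquiv : t.Rt ≃ t'.Rt
  map_root : (toEquiv ⟨t.root, Relation.ReflTransGen.refl⟩).1 = t'.root
  map_edge : ∀ (u v : t.Rt) (l : Option A),
    t.edge u.1 l v.1 ↔ t'.edge (toEquiv u).1 l (toEquiv v).1

def Isomorphic (t t' : SyncTree A) : Prop := Nonempty (t.Isomorphism t')

/-- A morphism of synchronization trees: a function on vertices preserving the
root, the edges and the labels. -/
structure Hom (t t' : SyncTree A) where
  toFun : t.V → t'.V
  map_root : toFun t.root = t'.root
  map_edge : ∀ u l v, t.edge u l v → t'.edge (toFun u) l (toFun v)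

/-- `LabeledPath t u w v` : there is a path of `A`-labelled edges from `u` to
`v` whose labels spell the word `w`. -/
inductive LabeledPath (t : SyncTree A) : t.V → List A → t.V → Prop
  | refl (v : t.V) : LabeledPath t v [] v
  | step {u v w : t.V} {a : A} {word : List A} :
      t.edge u (some a) v → LabeledPath t v word w → LabeledPath t u (a :: word) w

/-- The path language of `t`: the words in `A*` labelling a path from the root
to the source of an exit edge. -/
def pathLanguage (t : SyncTree A) : Language A :=
  { w | ∃ u v, t.LabeledPath t.root w u ∧ t.edge u none v }

/-- The tree `0` with a single vertex and no edges. -/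
def zero : SyncTree A := ⟨PUnit, PUnit.unit, fun _ _ _ => False⟩

/-- The tree `1` with a single exit edge. -/
def one : SyncTree A := ⟨Bool, false, fun u l v => u = false ∧ l = none ∧ v = true⟩

/-- The tree denoted by the letter `a`: an `a`-edge followed by an exit edge. -/
def letter (a : A) : SyncTree A :=
  ⟨Fin 3, 0, fun u l v => (u = 0 ∧ l = some a ∧ v = 1) ∨ (u = 1 ∧ l = none ∧ v = 2)⟩

/-- The sum `t + t'`, obtained by merging the roots of disjoint copies. -/
def sum (t t' : SyncTree A) : SyncTree A where
  V := t.V ⊕ t'.V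
  root := Sum.inl t.root
  edge u l v :=
    match u, v with
    | Sum.inl x, Sum.inl y => t.edge x l y
    | Sum.inl x, Sum.inr y => x = t.root ∧ t'.edge t'.root l y
    | Sum.inr x, Sum.inr y => t'.edge x l y
    | Sum.inr _, Sum.inl _ => False

/-- The exit edges of `t`. -/
def ExE (t : SyncTree A) : Type := {p : t.V × t.V // t.edge p.1 none p.2}

/-- The sequential product `t · t'`, obtained by replacing each exit edge of
`t` by a fresh copy of `t'`. -/
def seq (t t' : SyncTree A) : SyncTree A where
  V := t.V ⊕ (t.ExE × t'.V)
  root := Sum.inl t.root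
  edge u l v :=
    match u, v with
    | Sum.inl x, Sum.inl y => (∃ a, l = some a) ∧ t.edge x l y
    | Sum.inl x, Sum.inr p => p.1.1.1 = x ∧ t'.edge t'.root l p.2
    | Sum.inr p, Sum.inr q => p.1 = q.1 ∧ t'.edge p.2 l q.2
    | Sum.inr _, Sum.inl _ => False

end SyncTree

open SyncTree

/-- The two-letter alphabet `{a, b}`. -/
inductive AB : Type
  | a | b
deriving DecidableEq

/-- Vertices `(n, m)` with `m ≤ n + 1`, standing for the word `aⁿbᵐ`. -/
def TV : Type := {p : ℕ × ℕ // p.2 ≤ p.1 + 1}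

/-- The tree `T` (shifted so that its root is the vertex `aᵏ`): from `aⁿ`
there is an `a`-edge to `aⁿ⁺¹` and a `b`-edge to `aⁿb`; from `aⁿbᵐ`
(`m ≤ n`) there is a `b`-edge to `aⁿbᵐ⁺¹`; and every vertex is the source of
an exit edge (the second copy of the vertices serves as exit targets). -/
def Tat (k : ℕ) : SyncTree AB where
  V := TV ⊕ TV
  root := Sum.inl ⟨(k, 0), by simp⟩
  edge u l v :=
    match u, v with
    | Sum.inl p, Sum.inl q =>
        (l = some AB.a ∧ p.1.2 = 0 ∧ q.1 = (p.1.1 + 1, 0)) ∨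
        (l = some AB.b ∧ q.1 = (p.1.1, p.1.2 + 1))
    | Sum.inl p, Sum.inr q => l = none ∧ p = q
    | _, _ => False

/-- The unfolding of a labelled transition system with state space `S`,
transition relation `tr` and initial state `init`: vertices are the finite
sequences of (label, state) steps from `init`. -/
def ltsUnfold {S : Type} (tr : S → Option AB → S → Prop) (init : S) :
    SyncTree AB where
  V := List (Option AB × S)
  root := []
  edge p l q := ∃ s : S,
    q = p ++ [(l, s)] ∧ tr (p.foldl (fun _ step => step.2) init) l s

namespace SyncTree

variable {A : Type}

def IsSimulation {t t' : SyncTree A} (R : t.V → t'.V → Prop) : Prop :=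
  ∀ u u', R u u' → ∀ l v, t.edge u l v → ∃ v', t'.edge u' l v' ∧ R v v'

theorem IsSimulation.comp {t t' t'' : SyncTree A} {R : t.V → t'.V → Prop}
    {R' : t'.V → t''.V → Prop} (hR : IsSimulation R) (hR' : IsSimulation R') :
    IsSimulation (Relation.Comp R R') := by
  rintro u u'' ⟨u', hu, hu'⟩ l v he
  obtain ⟨v', he', hv⟩ := hR u u' hu l v he
  obtain ⟨v'', he'', hv'⟩ := hR' u' u'' hu' l v' he'
  exact ⟨v'', he'', v', hv, hv'⟩

theorem IsSimulation.labeledPath {t t' : SyncTree A} {R : t.V → t'.V → Prop}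
    (hR : IsSimulation R) {u v : t.V} {w : List A} (p : t.LabeledPath u w v) {u' : t'.V}
    (hu : R u u') : ∃ v', t'.LabeledPath u' w v' ∧ R v v' := by
  induction p generalizing u' with
  | refl => exact ⟨u', .refl u', hu⟩
  | step he _ ih =>
    obtain ⟨x', he', hx⟩ := hR _ _ hu _ _ he
    obtain ⟨v', p', hv⟩ := ih hx
    exact ⟨v', .step he' p', hv⟩

def Isomorphism.symm {t t' : SyncTree A} (e : t.Isomorphism t') : t'.Isomorphism t where
  toEquiv := e.toEquiv.symm
  map_root := by
    have h : e.toEquiv.symm ⟨t'.root, .refl⟩ = ⟨t.root, .refl⟩ :=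
      e.toEquiv.symm_apply_eq.mpr (Subtype.ext e.map_root.symm)
    exact congrArg Subtype.val h
  map_edge u v l := by
    simpa using (e.map_edge (e.toEquiv.symm u) (e.toEquiv.symm v) l).symm

/-- Edges out of reachable vertices end in reachable vertices, so the graph of `e` is closed
under taking edges. -/
theorem Isomorphism.isSimulation {t t' : SyncTree A} (e : t.Isomorphism t') :
    IsSimulation (fun u u' => ∃ r : t.Rt, r.1 = u ∧ (e.toEquiv r).1 = u') := by
  rintro _ _ ⟨r, rfl, rfl⟩ l v he
  let rv : t.Rt := ⟨v, r.2.tail ⟨l, he⟩⟩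
  exact ⟨(e.toEquiv rv).1, (e.map_edge r rv l).1 he, rv, rfl, rfl⟩

end SyncTree

def ltsUnfold.state {S : Type} (init : S) (p : List (Option AB × S)) : S :=
  p.foldl (fun _ step => step.2) init

theorem ltsUnfold.isSimulation_state_eq {S : Type} (tr : S → Option AB → S → Prop) (init : S) :
    IsSimulation (t := ltsUnfold tr init) (t' := ltsUnfold tr init)
      (fun p q => ltsUnfold.state init p = ltsUnfold.state init q) := by
  rintro (p : List (Option AB × S)) (q : List (Option AB × S)) hpq l _ ⟨s, rfl, htr⟩
  refine ⟨q ++ [(l, s)], ⟨s, rfl, ?_⟩, ?_⟩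
  · exact (congrArg (tr · l s) hpq).mp htr
  · simp [ltsUnfold.state]

def Tat.aPow (n : ℕ) : TV ⊕ TV := Sum.inl ⟨(n, 0), Nat.zero_le _⟩

theorem Tat.reaches_aPow {K n : ℕ} (h : K ≤ n) : (Tat K).Reaches (Tat K).root (Tat.aPow n) := by
  induction n, h using Nat.le_induction with
  | base => exact .refl
  | succ n _ ih => exact ih.tail ⟨some AB.a, Or.inl ⟨rfl, rfl, rfl⟩⟩

theorem Tat.le_of_labeledPath_replicate_b {K n m j : ℕ} {h : j ≤ n + 1} {w : (Tat K).V}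
    (p : (Tat K).LabeledPath (Sum.inl ⟨(n, j), h⟩) (List.replicate m AB.b) w) :
    j + m ≤ n + 1 := by
  induction m generalizing j with
  | zero => simpa using h
  | succ m ih =>
    rw [List.replicate_succ] at p
    match p with
    | .step he p =>
      rename_i v
      match v, he with
      | Sum.inl _, Or.inl ⟨ha, _⟩ => nomatch ha
      | Sum.inl ⟨_, _⟩, Or.inr ⟨_, hq⟩ =>
        obtain rfl := hq
        have := ih p
        dsimp only at this
        omega
      | Sum.inr _, ⟨hl, _⟩ => nomatch hl

theorem Tat.exists_labeledPath_replicate_b {K n m j : ℕ} (h : j + m ≤ n + 1) :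
    ∃ w, (Tat K).LabeledPath (Sum.inl ⟨(n, j), by omega⟩) (List.replicate m AB.b) w := by
  induction m generalizing j with
  | zero => exact ⟨_, .refl _⟩
  | succ m ih =>
    obtain ⟨w, p⟩ := ih (j := j + 1) (by omega)
    refine ⟨w, .step (v := Sum.inl ⟨(n, j + 1), by omega⟩) ?_ p⟩
    exact Or.inr ⟨rfl, rfl⟩

theorem Tat.le_of_isSimulation {K L i j : ℕ} {R : (Tat K).V → (Tat L).V → Prop}
    (hR : IsSimulation R) (hij : R (Tat.aPow i) (Tat.aPow j)) : i ≤ j := by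
  obtain ⟨_, p⟩ := Tat.exists_labeledPath_replicate_b (K := K) (n := i) (m := i + 1) (j := 0)
    (by omega)
  obtain ⟨_, p', _⟩ := hR.labeledPath p hij
  have := Tat.le_of_labeledPath_replicate_b p'
  omega

/-- The subtrees of `T` rooted at the vertices `aᵏ` are pairwise
non-bisimilar; hence `T` has infinitely many subtrees up to bisimilarity and
is not the unfolding of any finite labelled transition system. -/
theorem T_subtrees_pairwise_nonbisimilar_and_not_finite_unfolding :
    (∀ k l : ℕ, k ≠ l → ¬ (Tat k).Bisimilar (Tat l)) ∧
    (∀ (S : Type), Finite S → ∀ (init : S) (tr : S → Option AB → S → Prop),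
      ¬ (Tat 0).Isomorphic (ltsUnfold tr init)) := by
  constructor
  · rintro k l hkl ⟨R, hroot, hfwd, hbwd⟩
    have hkl' : k ≤ l := Tat.le_of_isSimulation hfwd hroot
    have hlk : l ≤ k := Tat.le_of_isSimulation (R := fun u' u => R u u')
      (fun u' u h => hbwd u u' h) hroot
    omega
  · rintro S hS init tr ⟨e⟩
    let vertex (n : ℕ) : (Tat 0).Rt := ⟨Tat.aPow n, Tat.reaches_aPow n.zero_le⟩
    let state (n : ℕ) : S := ltsUnfold.state init (e.toEquiv (vertex n)).1
    have hsim := e.isSimulation.comp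
      ((ltsUnfold.isSimulation_state_eq tr init).comp e.symm.isSimulation)
    have hle {i j : ℕ} (hij : state i = state j) : i ≤ j := by
      have hj : (e.toEquiv.symm (e.toEquiv (vertex j))).1 = Tat.aPow j :=
        congrArg Subtype.val (e.toEquiv.symm_apply_apply (vertex j))
      exact Tat.le_of_isSimulation hsim ⟨_, ⟨vertex i, rfl, rfl⟩, _, hij, _, rfl, hj⟩
    exact not_injective_infinite_finite state fun i j hij => (hle hij).antisymm (hle hij.symm)
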